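/- arXiv:1004.0347 — 2 statements merged into one kernel-verified Lean document; each statement's English description precedes it below -/
import Mathlib

section
/- Terquem's theorem: Let A, B, C be affinely independent points in the Euclidean plane. Let A₁ be strictly between B and C, B₁ strictly between C and A, and C₁ strictly between A and B, with A₁, B₁, C₁ affinely independent, and suppose the lines AA₁, BB₁, CC₁ have a common point. Let S be the circle through A₁, B₁, C₁, and let A₂, B₂, C₂ be points with A₂ strictly between B and C, B₂ strictly between C and A, C₂ strictly between A and B, such that S ∩ line BC = {A₁, A₂}, S ∩ line CA = {B₁, B₂}, and S ∩ line AB = {C₁, C₂}. Then the lines AA₂, BB₂, CC₂ have a common point. -/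
/-!
Write `A₁ = lineMap B C a₁`, `B₁ = lineMap C A b₁`, `C₁ = lineMap A B c₁` and likewise for the
second triple. By Ceva, the first cevians concur iff `a₁ b₁ c₁ = (1 - a₁) (1 - b₁) (1 - c₁)`.
The power of a vertex with respect to the circle can be read off either side through it, e.g.
the power of `B` is `BC² a₁ a₂ = AB² (1 - c₁) (1 - c₂)` (the tangent case is a double root).
Multiplying the three identities gives Carnot's relation
`a₁ a₂ b₁ b₂ c₁ c₂ = ∏ (1 - ·) (1 - ·)`; dividing by Ceva's relation for the first triple gives it
for the second, and the converse of Ceva makes the second cevians concur.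
-/

open AffineMap

theorem quadratic_eq_mul_sub_mul_sub {K : Type*} [Field K] {a b c p q : K} (ha : a ≠ 0)
    (h : ∀ x, a * x ^ 2 + b * x + c = 0 ↔ x = p ∨ x = q) (x : K) :
    a * x ^ 2 + b * x + c = a * ((x - p) * (x - q)) := by
  have hp : a * p ^ 2 + b * p + c = 0 := (h p).2 (.inl rfl)
  have hq : a * q ^ 2 + b * q + c = 0 := (h q).2 (.inr rfl)
  -- `p` is a root, and Vieta's formula gives the other one
  set p' := -b / a - p
  have hfactor : ∀ y, a * y ^ 2 + b * y + c = a * ((y - p) * (y - p')) := fun y ↦ by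
    simp only [p']
    field_simp
    linear_combination hp
  rcases (h p').1 (by rw [hfactor]; ring) with hp' | hp'
  · have hqp : q = p := by
      have hsq : a * ((q - p) * (q - p)) = 0 := by rw [← hq, hfactor, hp']
      exact sub_eq_zero.1 (mul_self_eq_zero.1 ((mul_eq_zero.1 hsq).resolve_left ha))
    rw [hfactor, hp', hqp]
  · rw [hfactor, hp']

section Power

variable {V P : Type*} [NormedAddCommGroup V] [InnerProductSpace ℝ V] [MetricSpace P]
  [NormedAddTorsor V P]

theorem dist_lineMap_sq (B C O : P) (x : ℝ) :
    dist (lineMap B C x) O ^ 2 =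
      dist B C ^ 2 * x ^ 2 + 2 * inner ℝ (C -ᵥ B) (B -ᵥ O) * x + dist B O ^ 2 := by
  rw [dist_eq_norm_vsub V, dist_eq_norm_vsub' V B C, dist_eq_norm_vsub V B O, lineMap_apply,
    vadd_vsub_assoc, norm_add_sq_real, norm_smul, real_inner_smul_left, mul_pow,
    Real.norm_eq_abs, sq_abs]
  ring

theorem dist_lineMap_sq_sub_sq_eq_of_sphere_inter_eq {O B C : P} {r p q : ℝ} (hBC : B ≠ C)
    (h : Metric.sphere O r ∩ (line[ℝ, B, C] : Set P) = {lineMap B C p, lineMap B C q})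
    (x : ℝ) : dist (lineMap B C x) O ^ 2 - r ^ 2 = dist B C ^ 2 * ((x - p) * (x - q)) := by
  have hr : 0 ≤ r := by
    have hp : lineMap B C p ∈ Metric.sphere O r ∩ (line[ℝ, B, C] : Set P) := by
      rw [h]; exact .inl rfl
    exact Metric.mem_sphere.1 hp.1 ▸ dist_nonneg
  have hroots : ∀ y, dist B C ^ 2 * y ^ 2 + 2 * inner ℝ (C -ᵥ B) (B -ᵥ O) * y
      + (dist B O ^ 2 - r ^ 2) = 0 ↔ y = p ∨ y = q := fun y ↦ by
    rw [← add_sub_assoc, ← dist_lineMap_sq, sub_eq_zero, pow_left_inj₀ dist_nonneg hr two_ne_zero,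
      ← Metric.mem_sphere, ← (lineMap_injective ℝ hBC).eq_iff, ← (lineMap_injective ℝ hBC).eq_iff]
    simpa [lineMap_mem_affineSpan_pair] using Set.ext_iff.1 h (lineMap B C y)
  have hBC' : dist B C ^ 2 ≠ 0 := pow_ne_zero 2 (dist_ne_zero.2 hBC)
  rw [← quadratic_eq_mul_sub_mul_sub hBC' hroots, dist_lineMap_sq]
  ring

theorem dist_sq_sub_sq_eq_of_sphere_inter_eq {O B C : P} {r p q : ℝ} (hBC : B ≠ C)
    (h : Metric.sphere O r ∩ (line[ℝ, B, C] : Set P) = {lineMap B C p, lineMap B C q}) :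
    dist B O ^ 2 - r ^ 2 = dist B C ^ 2 * (p * q) ∧
      dist C O ^ 2 - r ^ 2 = dist B C ^ 2 * ((1 - p) * (1 - q)) := by
  constructor
  · simpa using dist_lineMap_sq_sub_sq_eq_of_sphere_inter_eq hBC h 0
  · simpa using dist_lineMap_sq_sub_sq_eq_of_sphere_inter_eq hBC h 1

theorem mul_mul_eq_of_sphere_inter_eq {O A B C : P} {r a₁ a₂ b₁ b₂ c₁ c₂ : ℝ} (hAB : A ≠ B)
    (hBC : B ≠ C) (hCA : C ≠ A)
    (ha : Metric.sphere O r ∩ (line[ℝ, B, C] : Set P) = {lineMap B C a₁, lineMap B C a₂})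
    (hb : Metric.sphere O r ∩ (line[ℝ, C, A] : Set P) = {lineMap C A b₁, lineMap C A b₂})
    (hc : Metric.sphere O r ∩ (line[ℝ, A, B] : Set P) = {lineMap A B c₁, lineMap A B c₂}) :
    a₁ * a₂ * (b₁ * b₂) * (c₁ * c₂) =
      (1 - a₁) * (1 - a₂) * ((1 - b₁) * (1 - b₂)) * ((1 - c₁) * (1 - c₂)) := by
  obtain ⟨powB, powC'⟩ := dist_sq_sub_sq_eq_of_sphere_inter_eq hBC ha
  obtain ⟨powC, powA'⟩ := dist_sq_sub_sq_eq_of_sphere_inter_eq hCA hb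
  obtain ⟨powA, powB'⟩ := dist_sq_sub_sq_eq_of_sphere_inter_eq hAB hc
  have eB := powB.symm.trans powB'
  have eC := powC.symm.trans powC'
  have eA := powA.symm.trans powA'
  have hsides : dist B C ^ 2 * dist C A ^ 2 * dist A B ^ 2 ≠ 0 := by
    simp [hAB, hBC, hCA]
  refine mul_left_cancel₀ hsides ?_
  linear_combination (dist C A ^ 2 * (b₁ * b₂) * dist A B ^ 2 * (c₁ * c₂)) * eB
    + (dist A B ^ 2 * ((1 - c₁) * (1 - c₂)) * dist A B ^ 2 * (c₁ * c₂)) * eC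
    + (dist A B ^ 2 * ((1 - c₁) * (1 - c₂)) * dist B C ^ 2 * ((1 - a₁) * (1 - a₂))) * eA

end Power

section Ceva

variable {V : Type*} [AddCommGroup V] [Module ℝ V]

theorem mul_mul_eq_of_mem_line_lineMap {A B C P : V} {a b c : ℝ}
    (hABC : AffineIndependent ℝ ![A, B, C]) (hA : P ∈ line[ℝ, A, lineMap B C a])
    (hB : P ∈ line[ℝ, B, lineMap C A b]) (hC : P ∈ line[ℝ, C, lineMap A B c]) :
    a * b * c = (1 - a) * (1 - b) * (1 - c) := by
  have h := Affine.Triangle.prod_eq_prod_one_sub_of_mem_line_point_lineMap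
    (t := ⟨![A, B, C], hABC⟩) (r := ![a, b, c]) (p' := P) (by
      intro i
      fin_cases i
      exacts [hA, hB, hC])
  simpa [Fin.prod_univ_three] using h

theorem exists_mem_line_lineMap_of_mul_mul_eq (A B C : V) {a b c : ℝ} (ha : 0 ≤ a) (hb₀ : 0 ≤ b)
    (hb₁ : b < 1) (h : a * b * c = (1 - a) * (1 - b) * (1 - c)) :
    ∃ Q, Q ∈ line[ℝ, A, lineMap B C a] ∧ Q ∈ line[ℝ, B, lineMap C A b] ∧
      Q ∈ line[ℝ, C, lineMap A B c] := by
  -- `Q` has barycentric weights `(a b, (1 - a) (1 - b), a (1 - b))`; by the relation `h` they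
  -- are proportional to the weights of the cevian through each vertex
  obtain ⟨S, hS⟩ : ∃ S, S = 1 - b + a * b := ⟨_, rfl⟩
  have hS0 : S ≠ 0 := hS ▸ by positivity
  refine ⟨S⁻¹ • ((a * b) • A + ((1 - a) * (1 - b)) • B + (a * (1 - b)) • C),
    ?_, ?_, ?_⟩ <;> rw [mem_affineSpan_pair_iff_exists_lineMap_eq]
  · refine ⟨(1 - b) / S, ?_⟩
    simp only [lineMap_apply_module]
    match_scalars <;> field_simp
    linear_combination hS
  · refine ⟨a / S, ?_⟩
    simp only [lineMap_apply_module]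
    match_scalars <;> field_simp
    linear_combination hS
  · refine ⟨(a * b + (1 - a) * (1 - b)) / S, ?_⟩
    simp only [lineMap_apply_module]
    match_scalars <;> field_simp
    · linear_combination hS
    · linear_combination -h
    · linear_combination h

end Ceva

theorem terquem_general (A B C A₁ B₁ C₁ A₂ B₂ C₂ O : EuclideanSpace ℝ (Fin 2)) (r : ℝ)
    (hABC : AffineIndependent ℝ ![A, B, C])
    (hA₁ : Sbtw ℝ B A₁ C) (hB₁ : Sbtw ℝ C B₁ A) (hC₁ : Sbtw ℝ A C₁ B)
    (hconc : ∃ P, P ∈ line[ℝ, A, A₁] ∧ P ∈ line[ℝ, B, B₁] ∧ P ∈ line[ℝ, C, C₁])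
    (hA₂ : Sbtw ℝ B A₂ C) (hB₂ : Sbtw ℝ C B₂ A) (hC₂ : Sbtw ℝ A C₂ B)
    (hSa : Metric.sphere O r ∩ (line[ℝ, B, C] : Set (EuclideanSpace ℝ (Fin 2))) = {A₁, A₂})
    (hSb : Metric.sphere O r ∩ (line[ℝ, C, A] : Set (EuclideanSpace ℝ (Fin 2))) = {B₁, B₂})
    (hSc : Metric.sphere O r ∩ (line[ℝ, A, B] : Set (EuclideanSpace ℝ (Fin 2))) = {C₁, C₂}) :
    ∃ Q, Q ∈ line[ℝ, A, A₂] ∧ Q ∈ line[ℝ, B, B₂] ∧ Q ∈ line[ℝ, C, C₂] := by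
  obtain ⟨⟨a₁, ha₁, rfl⟩, hBC⟩ := sbtw_iff_mem_image_Ioo_and_ne.1 hA₁
  obtain ⟨⟨b₁, hb₁, rfl⟩, hCA⟩ := sbtw_iff_mem_image_Ioo_and_ne.1 hB₁
  obtain ⟨⟨c₁, hc₁, rfl⟩, hAB⟩ := sbtw_iff_mem_image_Ioo_and_ne.1 hC₁
  obtain ⟨⟨a₂, ha₂, rfl⟩, -⟩ := sbtw_iff_mem_image_Ioo_and_ne.1 hA₂
  obtain ⟨⟨b₂, hb₂, rfl⟩, -⟩ := sbtw_iff_mem_image_Ioo_and_ne.1 hB₂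
  obtain ⟨⟨c₂, -, rfl⟩, -⟩ := sbtw_iff_mem_image_Ioo_and_ne.1 hC₂
  obtain ⟨P, hPA, hPB, hPC⟩ := hconc
  have ceva₁ := mul_mul_eq_of_mem_line_lineMap hABC hPA hPB hPC
  have carnot := mul_mul_eq_of_sphere_inter_eq hAB hBC hCA hSa hSb hSc
  have h₁ : a₁ * b₁ * c₁ ≠ 0 := (mul_pos (mul_pos ha₁.1 hb₁.1) hc₁.1).ne'
  have ceva₂ : a₂ * b₂ * c₂ = (1 - a₂) * (1 - b₂) * (1 - c₂) :=
    mul_left_cancel₀ h₁ (by linear_combination carnot - (1 - a₂) * (1 - b₂) * (1 - c₂) * ceva₁)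
  exact exists_mem_line_lineMap_of_mul_mul_eq A B C ha₂.1.le hb₂.1.le hb₂.2 ceva₂

/-- **Terquem's theorem.** If the cevians `AA₁`, `BB₁`, `CC₁` of triangle `ABC` are
concurrent and the circle through `A₁`, `B₁`, `C₁` meets the sides `BC`, `CA`, `AB` again
in `A₂`, `B₂`, `C₂`, then the cevians `AA₂`, `BB₂`, `CC₂` are also concurrent. -/
theorem terquem (A B C A₁ B₁ C₁ A₂ B₂ C₂ O : EuclideanSpace ℝ (Fin 2)) (r : ℝ)
    (hABC : AffineIndependent ℝ ![A, B, C])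
    (hA₁ : Sbtw ℝ B A₁ C) (hB₁ : Sbtw ℝ C B₁ A) (hC₁ : Sbtw ℝ A C₁ B)
    (hA₁B₁C₁ : AffineIndependent ℝ ![A₁, B₁, C₁])
    (hconc : ∃ P, P ∈ line[ℝ, A, A₁] ∧ P ∈ line[ℝ, B, B₁] ∧ P ∈ line[ℝ, C, C₁])
    (hr : 0 < r)
    (hA₁S : A₁ ∈ Metric.sphere O r) (hB₁S : B₁ ∈ Metric.sphere O r)
    (hC₁S : C₁ ∈ Metric.sphere O r)
    (hA₂ : Sbtw ℝ B A₂ C) (hB₂ : Sbtw ℝ C B₂ A) (hC₂ : Sbtw ℝ A C₂ B)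
    (hSa : Metric.sphere O r ∩ (line[ℝ, B, C] : Set (EuclideanSpace ℝ (Fin 2))) = {A₁, A₂})
    (hSb : Metric.sphere O r ∩ (line[ℝ, C, A] : Set (EuclideanSpace ℝ (Fin 2))) = {B₁, B₂})
    (hSc : Metric.sphere O r ∩ (line[ℝ, A, B] : Set (EuclideanSpace ℝ (Fin 2))) = {C₁, C₂}) :
    ∃ Q, Q ∈ line[ℝ, A, A₂] ∧ Q ∈ line[ℝ, B, B₂] ∧ Q ∈ line[ℝ, C, C₂] :=
  terquem_general A B C A₁ B₁ C₁ A₂ B₂ C₂ O r hABC hA₁ hB₁ hC₁ hconc hA₂ hB₂ hC₂ hSa hSb hSc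
end

section
/- The Smarandache–Pătrașcu theorem of orthohomological triangles: Let A, B, C be affinely independent points in the Euclidean plane and let P₁, P₂ be points in the interior of triangle ABC such that ∠ B A P₁ = ∠ C A P₂, ∠ C B P₁ = ∠ A B P₂, and ∠ A C P₁ = ∠ B C P₂ (P₁ and P₂ are isogonal conjugates). For i = 1, 2 let Aᵢ, Bᵢ, Cᵢ be the orthogonal projections of Pᵢ onto the lines BC, CA, AB respectively (the pedal triangles of P₁ and P₂). If the lines AA₁, BB₁, CC₁ have a common point (triangles ABC and A₁B₁C₁ are homological), then the lines AA₂, BB₂, CC₂ also have a common point (triangles ABC and A₂B₂C₂ are homological). -/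
open EuclideanGeometry RealInnerProductSpace

/-!
Write the feet on `BC`, `CA`, `AB` as `lineMap B C p`, `lineMap C A q`, `lineMap A B r`. In
barycentric coordinates the cevians through them are concurrent exactly when
`p q r = (1 - p) (1 - q) (1 - r)` (Ceva), unless the three cevians are parallel.

At the vertex `B`, equal angles `∠ C B P₁ = ∠ A B P₂` for two interior points give the
power-of-a-point relation `BA₁ · BA₂ = BC₁ · BC₂` between signed distances to the feet (the six
feet lie on one circle): comparing the sines of the two angles fixes the ratio of the norms, and
the cosines then give the relation. Multiplying the relations at the three vertices shows that the
Ceva products of the two pedal triangles are inverse to each other, and a foot at a vertex in one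
pedal triangle is matched by a foot at that vertex in the other. Finally an interior point sees,
from each vertex, one of the two sides at an acute angle, which keeps the cevians of the second
pedal triangle from being parallel.
-/

/-- The cevians from `A`, `B`, `C` to `lineMap B C p`, `lineMap C A q`, `lineMap A B r` meet at
the point `x • A + y • B + z • C`. -/
def CeviansConcurrent (p q r : ℝ) : Prop :=
  ∃ x y z : ℝ, x + y + z = 1 ∧ y * p = z * (1 - p) ∧ z * q = x * (1 - q) ∧ x * r = y * (1 - r)

namespace CeviansConcurrent

variable {p q r : ℝ}

theorem rotate (h : CeviansConcurrent p q r) : CeviansConcurrent q r p := by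
  obtain ⟨x, y, z, hs, hp, hq, hr⟩ := h
  exact ⟨y, z, x, by linarith, hq, hr, hp⟩

/-- Ceva's product is the determinant of the linear system in `x, y, z`; the coefficients are the
column sums of its adjugate. -/
theorem ceva (h : CeviansConcurrent p q r) : p * q * r = (1 - p) * (1 - q) * (1 - r) := by
  obtain ⟨x, y, z, hs, hp, hq, hr⟩ := h
  linear_combination (q + (1 - q) * (1 - r)) * hp + (1 - p + p * r) * hq
    + (p + (1 - p) * (1 - q)) * hr - (p * q * r - (1 - p) * (1 - q) * (1 - r)) * hs

theorem of_ceva_of_ne (h : p * q * r = (1 - p) * (1 - q) * (1 - r)) (hS : 1 - q * (1 - p) ≠ 0) :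
    CeviansConcurrent p q r := by
  refine ⟨p * q / (1 - q * (1 - p)), (1 - p) * (1 - q) / (1 - q * (1 - p)),
    p * (1 - q) / (1 - q * (1 - p)), ?_, ?_, ?_, ?_⟩
  · field_simp
    ring
  · field_simp
  · field_simp
  · field_simp
    linear_combination h

/-- The hypotheses say that at each vertex one of the two adjacent feet lies on the open ray from
that vertex along its side; this rules out three parallel cevians. -/
theorem of_ceva (hB : 0 < p ∨ 0 < 1 - r) (hC : 0 < q ∨ 0 < 1 - p) (hA : 0 < r ∨ 0 < 1 - q)
    (h : p * q * r = (1 - p) * (1 - q) * (1 - r)) : CeviansConcurrent p q r := by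
  by_cases hC' : 1 - q * (1 - p) = 0
  · by_cases hA' : 1 - r * (1 - q) = 0
    · by_cases hB' : 1 - p * (1 - r) = 0
      · exfalso
        have pos : ∀ a b : ℝ, (0 < a ∨ 0 < b) → a * b = 1 → 0 < a ∧ 0 < b := fun a b hab h1 =>
          (pos_and_pos_or_neg_and_neg_of_mul_pos (h1 ▸ one_pos)).resolve_right
            fun hn => by rcases hab with h | h <;> linarith [hn.1, hn.2]
        obtain ⟨hq, hp⟩ := pos q (1 - p) hC (by linarith)
        obtain ⟨-, hq'⟩ := pos r (1 - q) hA (by linarith)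
        obtain ⟨hp', -⟩ := pos p (1 - r) hB (by linarith)
        nlinarith [mul_pos hq' hp]
      · exact (of_ceva_of_ne (by linear_combination h) hB').rotate
    · exact (of_ceva_of_ne (by linear_combination h) hA').rotate.rotate
  · exact of_ceva_of_ne h hC'

end CeviansConcurrent

theorem eq_zero_iff_of_mul_eq_mul {x₁ x₂ y₁ y₂ k l : ℝ} (hk : 0 < k) (hl : 0 < l)
    (h₁ : 0 < x₁ ∨ 0 < y₁) (h₂ : 0 < x₂ ∨ 0 < y₂) (h : x₁ * x₂ * k = y₁ * y₂ * l) :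
    x₁ = 0 ↔ y₂ = 0 := by
  constructor
  · rintro rfl
    have hy₁ : 0 < y₁ := h₁.resolve_left (lt_irrefl 0)
    have : y₁ * y₂ * l = 0 := by rw [← h]; ring
    simpa [hy₁.ne', hl.ne'] using this
  · rintro rfl
    have hx₂ : 0 < x₂ := h₂.resolve_right (lt_irrefl 0)
    have : x₁ * x₂ * k = 0 := by rw [h]; ring
    simpa [hx₂.ne', hk.ne'] using this

theorem ceva_transfer_of_power_of_point {p₁ q₁ r₁ p₂ q₂ r₂ a b c : ℝ}
    (ha : 0 < a) (hb : 0 < b) (hc : 0 < c)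
    (hB : p₁ * p₂ * a = (1 - r₁) * (1 - r₂) * c) (hC : q₁ * q₂ * b = (1 - p₁) * (1 - p₂) * a)
    (hA : r₁ * r₂ * c = (1 - q₁) * (1 - q₂) * b)
    (hB₁ : 0 < p₁ ∨ 0 < 1 - r₁) (hC₁ : 0 < q₁ ∨ 0 < 1 - p₁) (hA₁ : 0 < r₁ ∨ 0 < 1 - q₁)
    (hB₂ : 0 < p₂ ∨ 0 < 1 - r₂) (hC₂ : 0 < q₂ ∨ 0 < 1 - p₂) (hA₂ : 0 < r₂ ∨ 0 < 1 - q₂)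
    (h₁ : p₁ * q₁ * r₁ = (1 - p₁) * (1 - q₁) * (1 - r₁)) :
    p₂ * q₂ * r₂ = (1 - p₂) * (1 - q₂) * (1 - r₂) := by
  by_cases h0 : p₁ * q₁ * r₁ = 0
  · have h0' : (1 - p₁) * (1 - q₁) * (1 - r₁) = 0 := h₁ ▸ h0
    have hp₁ := eq_zero_iff_of_mul_eq_mul ha hc hB₁ hB₂ hB
    have hq₁ := eq_zero_iff_of_mul_eq_mul hb ha hC₁ hC₂ hC
    have hr₁ := eq_zero_iff_of_mul_eq_mul hc hb hA₁ hA₂ hA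
    have hp₂ := eq_zero_iff_of_mul_eq_mul hc ha hB₁.symm hB₂.symm hB.symm
    have hq₂ := eq_zero_iff_of_mul_eq_mul ha hb hC₁.symm hC₂.symm hC.symm
    have hr₂ := eq_zero_iff_of_mul_eq_mul hb hc hA₁.symm hA₂.symm hA.symm
    have e₁ : (1 - p₂) * (1 - q₂) * (1 - r₂) = 0 := by
      simp only [mul_eq_zero] at h0 ⊢
      rw [hp₁, hq₁, hr₁] at h0
      rcases h0 with (h | h) | h <;> simp [h]
    have e₂ : p₂ * q₂ * r₂ = 0 := by
      simp only [mul_eq_zero] at h0' ⊢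
      rw [hp₂, hq₂, hr₂] at h0'
      rcases h0' with (h | h) | h <;> simp [h]
    rw [e₁, e₂]
  · have hprod : p₁ * q₁ * r₁ * (p₂ * q₂ * r₂) * (a * b * c)
        = (1 - p₁) * (1 - q₁) * (1 - r₁) * ((1 - p₂) * (1 - q₂) * (1 - r₂)) * (a * b * c) := by
      linear_combination (q₁ * q₂ * b) * (r₁ * r₂ * c) * hB
        + ((1 - r₁) * (1 - r₂) * c) * (r₁ * r₂ * c) * hC
        + ((1 - r₁) * (1 - r₂) * c) * ((1 - p₁) * (1 - p₂) * a) * hA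
    refine mul_left_cancel₀ (mul_ne_zero h0 (by positivity : a * b * c ≠ 0)) ?_
    linear_combination hprod - (1 - p₂) * (1 - q₂) * (1 - r₂) * (a * b * c) * h₁

section Barycentric

variable {k V : Type*} [AddCommGroup V] {A B C : V}

theorem AffineIndependent.smul_add_smul_add_smul_inj [Ring k] [Module k V]
    (h : AffineIndependent k ![A, B, C]) {x y z x' y' z' : k} (hs : x + y + z = x' + y' + z')
    (he : x • A + y • B + z • C = x' • A + y' • B + z' • C) : x = x' ∧ y = y' ∧ z = z' := by
  have := h.eq_of_sum_eq_sum (s := Finset.univ) (w₁ := ![x, y, z]) (w₂ := ![x', y', z'])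
    (by simpa [Fin.sum_univ_three] using hs) (by simpa [Fin.sum_univ_three] using he)
  exact ⟨this 0 (by simp), this 1 (by simp), this 2 (by simp)⟩

theorem AffineIndependent.linearIndependent_sub_sub [CommRing k] [Module k V]
    (h : AffineIndependent k ![A, B, C]) : LinearIndependent k ![C - B, A - B] := by
  refine LinearIndependent.pair_iff.2 fun s t hst => ?_
  obtain ⟨ht, -, hs⟩ := h.smul_add_smul_add_smul_inj (x' := 0) (y' := 0) (z' := 0)
    (x := t) (y := -s - t) (z := s) (by abel) (by rw [← sub_eq_zero, ← hst]; module)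
  exact ⟨hs, ht⟩

end Barycentric

section Cevians

variable {V : Type*} [AddCommGroup V] [Module ℝ V] {A B C X : V} {x y z t : ℝ}

open AffineMap

theorem lineMap_lineMap_eq (A B C : V) (s t : ℝ) :
    lineMap A (lineMap B C t) s = (1 - s) • A + (s * (1 - t)) • B + (s * t) • C := by
  simp only [lineMap_apply_module]
  module

theorem exists_eq_of_mem_line_lineMap (hX : X ∈ line[ℝ, A, lineMap B C t]) :
    ∃ x y z : ℝ, x + y + z = 1 ∧ x • A + y • B + z • C = X := by
  obtain ⟨s, rfl⟩ := mem_affineSpan_pair_iff_exists_lineMap_eq.1 hX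
  exact ⟨_, _, _, by ring, (lineMap_lineMap_eq A B C s t).symm⟩

theorem smul_add_smul_add_smul_mem_line_lineMap_iff (h : AffineIndependent ℝ ![A, B, C])
    (hxyz : x + y + z = 1) :
    x • A + y • B + z • C ∈ line[ℝ, A, lineMap B C t] ↔ y * t = z * (1 - t) := by
  rw [mem_affineSpan_pair_iff_exists_lineMap_eq]
  constructor
  · rintro ⟨s, hs⟩
    rw [lineMap_lineMap_eq] at hs
    obtain ⟨-, rfl, rfl⟩ := h.smul_add_smul_add_smul_inj (by linarith) hs
    ring
  · intro hyz
    refine ⟨y + z, ?_⟩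
    rw [lineMap_lineMap_eq, show 1 - (y + z) = x by linarith,
      show (y + z) * (1 - t) = y by linear_combination -hyz,
      show (y + z) * t = z by linear_combination hyz]

theorem concurrent_iff_ceviansConcurrent (h : AffineIndependent ℝ ![A, B, C]) {p q r : ℝ} :
    (∃ X, X ∈ line[ℝ, A, lineMap B C p] ∧ X ∈ line[ℝ, B, lineMap C A q]
      ∧ X ∈ line[ℝ, C, lineMap A B r]) ↔ CeviansConcurrent p q r := by
  have hB := h.comm_left.comm_right
  have hC := hB.comm_left.comm_right
  have rotB (x y z : ℝ) : x • A + y • B + z • C = y • B + z • C + x • A := by abel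
  have rotC (x y z : ℝ) : x • A + y • B + z • C = z • C + x • A + y • B := by abel
  constructor
  · rintro ⟨X, hXA, hXB, hXC⟩
    obtain ⟨x, y, z, hs, rfl⟩ := exists_eq_of_mem_line_lineMap hXA
    rw [rotB] at hXB
    rw [rotC] at hXC
    exact ⟨x, y, z, hs, (smul_add_smul_add_smul_mem_line_lineMap_iff h hs).1 hXA,
      (smul_add_smul_add_smul_mem_line_lineMap_iff hB (by linarith)).1 hXB,
      (smul_add_smul_add_smul_mem_line_lineMap_iff hC (by linarith)).1 hXC⟩
  · rintro ⟨x, y, z, hs, hp, hq, hr⟩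
    refine ⟨x • A + y • B + z • C, (smul_add_smul_add_smul_mem_line_lineMap_iff h hs).2 hp, ?_, ?_⟩
    · rw [rotB]
      exact (smul_add_smul_add_smul_mem_line_lineMap_iff hB (by linarith)).2 hq
    · rw [rotC]
      exact (smul_add_smul_add_smul_mem_line_lineMap_iff hC (by linarith)).2 hr

end Cevians

section InnerProduct

variable {V : Type*} [NormedAddCommGroup V] [InnerProductSpace ℝ V]

theorem inner_mul_inner_lt_of_linearIndependent {u v : V} (h : LinearIndependent ℝ ![u, v]) :
    ⟪u, v⟫ * ⟪u, v⟫ < ⟪u, u⟫ * ⟪v, v⟫ := by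
  have hv : v ≠ 0 := h.ne_zero 1
  have hvv : 0 < ⟪v, v⟫ := real_inner_self_pos.2 hv
  have hx : ⟪v, v⟫ • u - ⟪u, v⟫ • v ≠ 0 := fun h0 =>
    hvv.ne' (LinearIndependent.pair_iff.1 h _ (-⟪u, v⟫) (by rw [← h0]; module)).1
  have key : ⟪⟪v, v⟫ • u - ⟪u, v⟫ • v, ⟪v, v⟫ • u - ⟪u, v⟫ • v⟫
      = ⟪v, v⟫ * (⟪u, u⟫ * ⟪v, v⟫ - ⟪u, v⟫ * ⟪u, v⟫) := by
    simp only [inner_sub_left, inner_sub_right, real_inner_smul_left, real_inner_smul_right,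
      real_inner_comm u v]
    ring
  have := real_inner_self_pos.2 hx
  rw [key] at this
  linarith [(mul_pos_iff_of_pos_left hvv).1 this]

/-- With `u = C - B`, `v = A - B` and `Pᵢ - B = αᵢ v + γᵢ u`, this is the barycentric relation
`α₂ : γ₂ = a² / α₁ : c² / γ₁` between isogonal conjugates, read off at the vertex `B`. -/
theorem mul_mul_norm_sq_eq_of_angle_eq {u v : V} {s₁ t₁ s₂ t₂ : ℝ}
    (huv : LinearIndependent ℝ ![u, v]) (hs₁ : 0 < s₁) (ht₂ : 0 < t₂)
    (h : InnerProductGeometry.angle u (s₁ • v + t₁ • u)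
      = InnerProductGeometry.angle v (s₂ • v + t₂ • u)) :
    t₁ * t₂ * ‖u‖ ^ 2 = s₁ * s₂ * ‖v‖ ^ 2 := by
  set w₁ := s₁ • v + t₁ • u
  set w₂ := s₂ • v + t₂ • u
  set θ := InnerProductGeometry.angle v w₂
  have hG := sub_pos.2 (inner_mul_inner_lt_of_linearIndependent huv)
  have gram₁ : ⟪u, u⟫ * ⟪w₁, w₁⟫ - ⟪u, w₁⟫ * ⟪u, w₁⟫
      = s₁ ^ 2 * (⟪u, u⟫ * ⟪v, v⟫ - ⟪u, v⟫ * ⟪u, v⟫) := by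
    simp only [w₁, inner_add_left, inner_add_right, real_inner_smul_left, real_inner_smul_right,
      real_inner_comm u v]
    ring
  have gram₂ : ⟪v, v⟫ * ⟪w₂, w₂⟫ - ⟪v, w₂⟫ * ⟪v, w₂⟫
      = t₂ ^ 2 * (⟪u, u⟫ * ⟪v, v⟫ - ⟪u, v⟫ * ⟪u, v⟫) := by
    simp only [w₂, inner_add_left, inner_add_right, real_inner_smul_left, real_inner_smul_right,
      real_inner_comm u v]
    ring
  have sin₁ := InnerProductGeometry.sin_angle_mul_norm_mul_norm u w₁
  have sin₂ := InnerProductGeometry.sin_angle_mul_norm_mul_norm v w₂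
  rw [gram₁, Real.sqrt_mul (sq_nonneg _), Real.sqrt_sq hs₁.le, h] at sin₁
  rw [gram₂, Real.sqrt_mul (sq_nonneg _), Real.sqrt_sq ht₂.le] at sin₂
  have hsin : Real.sin θ ≠ 0 := by
    rintro h0
    rw [h0, zero_mul] at sin₁
    exact (mul_pos hs₁ (Real.sqrt_pos.2 hG)).ne' sin₁.symm
  have hN : t₂ * (‖u‖ * ‖w₁‖) = s₁ * (‖v‖ * ‖w₂‖) :=
    mul_left_cancel₀ hsin (by linear_combination t₂ * sin₁ - s₁ * sin₂)
  have cos₁ := InnerProductGeometry.cos_angle_mul_norm_mul_norm u w₁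
  have cos₂ := InnerProductGeometry.cos_angle_mul_norm_mul_norm v w₂
  rw [h] at cos₁
  have key : t₂ * ⟪u, w₁⟫ = s₁ * ⟪v, w₂⟫ := by
    linear_combination -t₂ * cos₁ + s₁ * cos₂ + Real.cos θ * hN
  simp only [w₁, w₂, inner_add_right, real_inner_smul_right, real_inner_self_eq_norm_sq,
    real_inner_comm u v] at key
  linear_combination key

theorem inner_pos_or_inner_pos_of_smul_add_smul {u v : V} {s t : ℝ} (hs : 0 ≤ s) (ht : 0 ≤ t)
    (hw : s • v + t • u ≠ 0) : 0 < ⟪s • v + t • u, u⟫ ∨ 0 < ⟪s • v + t • u, v⟫ := by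
  have key : t * ⟪s • v + t • u, u⟫ + s * ⟪s • v + t • u, v⟫ = ⟪s • v + t • u, s • v + t • u⟫ := by
    simp only [inner_add_right, real_inner_smul_right]
    ring
  by_contra! hc
  nlinarith [real_inner_self_pos.2 hw, mul_nonpos_of_nonneg_of_nonpos ht hc.1,
    mul_nonpos_of_nonneg_of_nonpos hs hc.2]

end InnerProduct

section Triangle

variable {V : Type*} [NormedAddCommGroup V] [InnerProductSpace ℝ V] {A B C P P₁ P₂ F : V}

open AffineMap

noncomputable def footParam (B C P : V) : ℝ := ⟪P - B, C - B⟫ / ‖C - B‖ ^ 2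

theorem eq_lineMap_footParam (hF : F ∈ line[ℝ, B, C]) (hPF : ⟪P - F, C - B⟫ = 0) :
    F = lineMap B C (footParam B C P) := by
  obtain ⟨t, rfl⟩ := mem_affineSpan_pair_iff_exists_lineMap_eq.1 hF
  obtain rfl | hBC := eq_or_ne B C
  · simp
  have hne : ‖C - B‖ ^ 2 ≠ 0 := pow_ne_zero 2 (norm_ne_zero_iff.2 (sub_ne_zero.2 hBC.symm))
  rw [lineMap_apply_module', show P - (t • (C - B) + B) = (P - B) - t • (C - B) by abel,
    inner_sub_left, real_inner_smul_left, real_inner_self_eq_norm_sq, sub_eq_zero] at hPF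
  rw [footParam, hPF, mul_div_cancel_right₀ _ hne]

theorem one_sub_footParam (hAB : A ≠ B) (P : V) :
    1 - footParam A B P = ⟪P - B, A - B⟫ / ‖B - A‖ ^ 2 := by
  have hne : ‖B - A‖ ^ 2 ≠ 0 := pow_ne_zero 2 (norm_ne_zero_iff.2 (sub_ne_zero.2 hAB.symm))
  rw [footParam, eq_div_iff hne, sub_mul, div_mul_cancel₀ _ hne, ← real_inner_self_eq_norm_sq,
    show P - A = (P - B) + (B - A) by abel, show A - B = -(B - A) by abel]
  simp only [inner_add_left, inner_neg_right]
  ring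

def InTriangleInterior (A B C P : V) : Prop :=
  ∃ α β γ : ℝ, 0 < α ∧ 0 < β ∧ 0 < γ ∧ α + β + γ = 1 ∧ α • A + β • B + γ • C = P

theorem InTriangleInterior.rotate (hP : InTriangleInterior A B C P) :
    InTriangleInterior B C A P := by
  obtain ⟨α, β, γ, hα, hβ, hγ, hs, rfl⟩ := hP
  exact ⟨β, γ, α, hβ, hγ, hα, by linarith, by abel⟩

theorem InTriangleInterior.exists_sub_eq (hP : InTriangleInterior A B C P) :
    ∃ α γ : ℝ, 0 < α ∧ 0 < γ ∧ P - B = α • (A - B) + γ • (C - B) := by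
  obtain ⟨α, β, γ, hα, -, hγ, hs, rfl⟩ := hP
  obtain rfl : β = 1 - α - γ := by linarith
  exact ⟨α, γ, hα, hγ, by module⟩

theorem footParam_pos_or_one_sub_footParam_pos (h : AffineIndependent ℝ ![A, B, C])
    (hP : InTriangleInterior A B C P) : 0 < footParam B C P ∨ 0 < 1 - footParam A B P := by
  obtain ⟨α, γ, hα, hγ, hPB⟩ := hP.exists_sub_eq
  have hw : α • (A - B) + γ • (C - B) ≠ 0 := fun h0 =>
    hα.ne' (LinearIndependent.pair_iff.1 h.linearIndependent_sub_sub γ α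
      (by rw [← h0, add_comm])).2
  have hBC : B ≠ C := h.injective.ne (by decide : (1 : Fin 3) ≠ 2)
  have hAB : A ≠ B := h.injective.ne (by decide : (0 : Fin 3) ≠ 1)
  rw [one_sub_footParam hAB, footParam, hPB, norm_sub_rev B A]
  exact (inner_pos_or_inner_pos_of_smul_add_smul hα.le hγ.le hw).imp
    (fun hpos => div_pos hpos (pow_pos (norm_sub_pos_iff.2 hBC.symm) 2))
    (fun hpos => div_pos hpos (pow_pos (norm_sub_pos_iff.2 hAB) 2))

/-- Both sides are the power of `B` with respect to the common pedal circle of `P₁` and `P₂`. -/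
theorem footParam_mul_footParam_of_angle_eq (h : AffineIndependent ℝ ![A, B, C])
    (hP₁ : InTriangleInterior A B C P₁) (hP₂ : InTriangleInterior A B C P₂)
    (hiso : ∠ C B P₁ = ∠ A B P₂) :
    footParam B C P₁ * footParam B C P₂ * ‖C - B‖ ^ 2
      = (1 - footParam A B P₁) * (1 - footParam A B P₂) * ‖B - A‖ ^ 2 := by
  obtain ⟨α₁, γ₁, hα₁, -, h₁⟩ := hP₁.exists_sub_eq
  obtain ⟨α₂, γ₂, -, hγ₂, h₂⟩ := hP₂.exists_sub_eq
  have hBC : B ≠ C := h.injective.ne (by decide : (1 : Fin 3) ≠ 2)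
  have hAB : A ≠ B := h.injective.ne (by decide : (0 : Fin 3) ≠ 1)
  have hiso' : γ₁ * γ₂ * ‖C - B‖ ^ 2 = α₁ * α₂ * ‖A - B‖ ^ 2 := by
    refine mul_mul_norm_sq_eq_of_angle_eq h.linearIndependent_sub_sub hα₁ hγ₂ ?_
    rw [← h₁, ← h₂]
    exact hiso
  have hu : ‖C - B‖ ≠ 0 := norm_ne_zero_iff.2 (sub_ne_zero.2 hBC.symm)
  have hv : ‖A - B‖ ≠ 0 := norm_ne_zero_iff.2 (sub_ne_zero.2 hAB)
  rw [one_sub_footParam hAB, one_sub_footParam hAB, footParam, footParam, h₁, h₂,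
    norm_sub_rev B A]
  field_simp
  simp only [inner_add_left, real_inner_smul_left, real_inner_self_eq_norm_sq,
    real_inner_comm (A - B) (C - B)]
  linear_combination (‖C - B‖ ^ 2 * ‖A - B‖ ^ 2 - ⟪A - B, C - B⟫ ^ 2) * hiso'

end Triangle

/-- **The Smarandache–Pătrașcu theorem of orthohomological triangles.** If `P₁`, `P₂` are
isogonal conjugate points in the interior of triangle `ABC` with pedal triangles `A₁B₁C₁`
and `A₂B₂C₂`, and triangles `ABC` and `A₁B₁C₁` are homological (the lines `AA₁`, `BB₁`,
`CC₁` are concurrent), then triangles `ABC` and `A₂B₂C₂` are also homological. -/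
theorem smarandache_patrascu (A B C P₁ P₂ A₁ B₁ C₁ A₂ B₂ C₂ : EuclideanSpace ℝ (Fin 2))
    (hABC : AffineIndependent ℝ ![A, B, C])
    (hP₁ : ∃ α β γ : ℝ, 0 < α ∧ 0 < β ∧ 0 < γ ∧ α + β + γ = 1 ∧ α • A + β • B + γ • C = P₁)
    (hP₂ : ∃ α β γ : ℝ, 0 < α ∧ 0 < β ∧ 0 < γ ∧ α + β + γ = 1 ∧ α • A + β • B + γ • C = P₂)
    (hisoA : ∠ B A P₁ = ∠ C A P₂) (hisoB : ∠ C B P₁ = ∠ A B P₂) (hisoC : ∠ A C P₁ = ∠ B C P₂)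
    (hA₁ : A₁ ∈ line[ℝ, B, C]) (hA₁perp : ⟪P₁ - A₁, C - B⟫ = 0)
    (hB₁ : B₁ ∈ line[ℝ, C, A]) (hB₁perp : ⟪P₁ - B₁, A - C⟫ = 0)
    (hC₁ : C₁ ∈ line[ℝ, A, B]) (hC₁perp : ⟪P₁ - C₁, B - A⟫ = 0)
    (hA₂ : A₂ ∈ line[ℝ, B, C]) (hA₂perp : ⟪P₂ - A₂, C - B⟫ = 0)
    (hB₂ : B₂ ∈ line[ℝ, C, A]) (hB₂perp : ⟪P₂ - B₂, A - C⟫ = 0)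
    (hC₂ : C₂ ∈ line[ℝ, A, B]) (hC₂perp : ⟪P₂ - C₂, B - A⟫ = 0)
    (hconc : ∃ P, P ∈ line[ℝ, A, A₁] ∧ P ∈ line[ℝ, B, B₁] ∧ P ∈ line[ℝ, C, C₁]) :
    ∃ Q, Q ∈ line[ℝ, A, A₂] ∧ Q ∈ line[ℝ, B, B₂] ∧ Q ∈ line[ℝ, C, C₂] := by
  replace hP₁ : InTriangleInterior A B C P₁ := hP₁
  replace hP₂ : InTriangleInterior A B C P₂ := hP₂
  have hBCA := hABC.comm_left.comm_right
  have hCAB := hBCA.comm_left.comm_right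
  rw [eq_lineMap_footParam hA₁ hA₁perp, eq_lineMap_footParam hB₁ hB₁perp,
    eq_lineMap_footParam hC₁ hC₁perp, concurrent_iff_ceviansConcurrent hABC] at hconc
  rw [eq_lineMap_footParam hA₂ hA₂perp, eq_lineMap_footParam hB₂ hB₂perp,
    eq_lineMap_footParam hC₂ hC₂perp, concurrent_iff_ceviansConcurrent hABC]
  have acute {P} (hP : InTriangleInterior A B C P) :=
    And.intro (footParam_pos_or_one_sub_footParam_pos hABC hP) <|
      And.intro (footParam_pos_or_one_sub_footParam_pos hBCA hP.rotate)
        (footParam_pos_or_one_sub_footParam_pos hCAB hP.rotate.rotate)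
  obtain ⟨acuteB₁, acuteC₁, acuteA₁⟩ := acute hP₁
  obtain ⟨acuteB₂, acuteC₂, acuteA₂⟩ := acute hP₂
  have side_pos {X Y Z : EuclideanSpace ℝ (Fin 2)} (h : AffineIndependent ℝ ![X, Y, Z]) :
      0 < ‖Z - Y‖ ^ 2 :=
    pow_pos (norm_sub_pos_iff.2 (h.injective.ne (by decide : (2 : Fin 3) ≠ 1))) 2
  exact CeviansConcurrent.of_ceva acuteB₂ acuteC₂ acuteA₂ <| ceva_transfer_of_power_of_point
    (side_pos hABC) (side_pos hBCA) (side_pos hCAB)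
    (footParam_mul_footParam_of_angle_eq hABC hP₁ hP₂ hisoB)
    (footParam_mul_footParam_of_angle_eq hBCA hP₁.rotate hP₂.rotate hisoC)
    (footParam_mul_footParam_of_angle_eq hCAB hP₁.rotate.rotate hP₂.rotate.rotate hisoA)
    acuteB₁ acuteC₁ acuteA₁ acuteB₂ acuteC₂ acuteA₂ hconc.ceva
end
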